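/- arXiv:2512.22663 — 4 statements merged into one kernel-verified Lean document; each statement's English description precedes it below -/
import Mathlib

section
/- Let (X, 𝒰) be a Hausdorff uniform space without isolated points and (X, f_{1,∞}) a periodic non-autonomous system with induced map g such that (X, g) has a transitive point. If the set of equicontinuity points of (X, f_{1,∞}) is nonempty, then every transitive point of (X, f_{1,∞}) is an equicontinuity point. -/
open Topology Filter Set
open scoped Uniformity

/-- `traj f n = f_n ∘ ⋯ ∘ f_1` (and `traj f 0 = id`), i.e. `f_1^n`. -/
def traj {X : Type*} (f : ℕ → X → X) : ℕ → X → X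
  | 0 => id
  | n + 1 => f (n + 1) ∘ traj f n

/-- The family `f` is periodic with period `p`. -/
def PeriodicFam {X : Type*} (f : ℕ → X → X) (p : ℕ) : Prop :=
  ∀ n, f (n + p) = f n

/-- A set of naturals is thick: it contains arbitrarily long blocks of consecutive integers. -/
def Thick (T : Set ℕ) : Prop :=
  ∀ k : ℕ, ∃ n : ℕ, ∀ i ≤ k, n + i ∈ T

/-- A set of naturals is syndetic: it has bounded gaps. -/
def Syndetic (S : Set ℕ) : Prop :=
  ∃ M : ℕ, ∀ n : ℕ, ∃ m ∈ S, n ≤ m ∧ m ≤ n + M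

/-- `x` is a transitive point of the non-autonomous system `(X, f_{1,∞})`. -/
def TransPt {X : Type*} [TopologicalSpace X] (f : ℕ → X → X) (x : X) : Prop :=
  Dense (Set.range fun n => traj f n x)

/-- `x` is a transitive point of the autonomous system `(X, g)`. -/
def TransPtAut {X : Type*} [TopologicalSpace X] (g : X → X) (x : X) : Prop :=
  Dense (Set.range fun n => g^[n] x)

/-- `x` is an equicontinuity point of `(X, f_{1,∞})` on a uniform space. -/
def EqPt {X : Type*} [UniformSpace X] (f : ℕ → X → X) (x : X) : Prop :=
  ∀ E ∈ 𝓤 X, ∃ D ∈ 𝓤 X, ∀ y : X, (x, y) ∈ D → ∀ n : ℕ, (traj f n x, traj f n y) ∈ E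

/-- `x` is a syndetically equicontinuous point of `(X, f_{1,∞})`. -/
def SynEqPt {X : Type*} [UniformSpace X] (f : ℕ → X → X) (x : X) : Prop :=
  ∀ E ∈ 𝓤 X, ∃ U ∈ 𝓝 x,
    Syndetic {n : ℕ | ∀ x₁ ∈ U, ∀ x₂ ∈ U, (traj f n x₁, traj f n x₂) ∈ E}

/-- `x` is a syndetically equicontinuous point of the autonomous system `(X, g)`. -/
def SynEqPtAut {X : Type*} [UniformSpace X] (g : X → X) (x : X) : Prop :=
  ∀ E ∈ 𝓤 X, ∃ U ∈ 𝓝 x,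
    Syndetic {n : ℕ | ∀ x₁ ∈ U, ∀ x₂ ∈ U, (g^[n] x₁, g^[n] x₂) ∈ E}

/-- `N(U, D)` for the non-autonomous system. -/
def NSet {X : Type*} (f : ℕ → X → X) (U : Set X) (D : Set (X × X)) : Set ℕ :=
  {n : ℕ | 0 < n ∧ ∃ x ∈ U, ∃ y ∈ U, (traj f n x, traj f n y) ∉ D}

/-- `N(U, D)` for the autonomous system. -/
def NSetAut {X : Type*} (g : X → X) (U : Set X) (D : Set (X × X)) : Set ℕ :=
  {n : ℕ | 0 < n ∧ ∃ x ∈ U, ∃ y ∈ U, (g^[n] x, g^[n] y) ∉ D}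

/-- Sensitivity of `(X, f_{1,∞})`. -/
def Sensitive {X : Type*} [UniformSpace X] (f : ℕ → X → X) : Prop :=
  ∃ D ∈ 𝓤 X, ∀ U : Set X, IsOpen U → U.Nonempty → (NSet f U D).Nonempty

/-- Thick sensitivity of `(X, f_{1,∞})`. -/
def ThickSensitive {X : Type*} [UniformSpace X] (f : ℕ → X → X) : Prop :=
  ∃ D ∈ 𝓤 X, ∀ U : Set X, IsOpen U → U.Nonempty → Thick (NSet f U D)

/-- Thick sensitivity of the autonomous system `(X, g)`. -/
def ThickSensitiveAut {X : Type*} [UniformSpace X] (g : X → X) : Prop :=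
  ∃ D ∈ 𝓤 X, ∀ U : Set X, IsOpen U → U.Nonempty → Thick (NSetAut g U D)

/-- Multi-sensitivity of `(X, f_{1,∞})`. -/
def MultiSensitive {X : Type*} [UniformSpace X] (f : ℕ → X → X) : Prop :=
  ∃ D ∈ 𝓤 X, ∀ (k : ℕ) (U : Fin (k + 1) → Set X),
    (∀ i, IsOpen (U i)) → (∀ i, (U i).Nonempty) → (⋂ i, NSet f (U i) D).Nonempty

/-- Multi-sensitivity of the autonomous system `(X, g)`. -/
def MultiSensitiveAut {X : Type*} [UniformSpace X] (g : X → X) : Prop :=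
  ∃ D ∈ 𝓤 X, ∀ (k : ℕ) (U : Fin (k + 1) → Set X),
    (∀ i, IsOpen (U i)) → (∀ i, (U i).Nonempty) → (⋂ i, NSetAut g (U i) D).Nonempty

/-- Eventual sensitivity of `(X, f_{1,∞})` with a given entourage `D`. -/
def EvSensitiveWith {X : Type*} [UniformSpace X] (f : ℕ → X → X) (D : Set (X × X)) : Prop :=
  ∀ x : X, ∀ E ∈ 𝓤 X, ∃ n k : ℕ, 0 < n ∧ 0 < k ∧
    ∃ y : X, (traj f n x, y) ∈ E ∧ (traj f (n + k) x, traj f k y) ∉ D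

/-- Eventual sensitivity of `(X, f_{1,∞})`. -/
def EvSensitive {X : Type*} [UniformSpace X] (f : ℕ → X → X) : Prop :=
  ∃ D ∈ 𝓤 X, EvSensitiveWith f D

/-- Eventual sensitivity of the autonomous system `(X, g)` with entourage `D`. -/
def EvSensitiveAutWith {X : Type*} [UniformSpace X] (g : X → X) (D : Set (X × X)) : Prop :=
  ∀ x : X, ∀ E ∈ 𝓤 X, ∃ q k : ℕ, 0 < q ∧ 0 < k ∧
    ∃ y : X, (g^[q] x, y) ∈ E ∧ (g^[q + k] x, g^[k] y) ∉ D

/-- `(x, y)` is a (topological) equicontinuity pair for `(X, f_{1,∞})`. -/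
def EqPair {X : Type*} [TopologicalSpace X] (f : ℕ → X → X) (x y : X) : Prop :=
  ∀ O ∈ 𝓝 y, ∃ U ∈ 𝓝 x, ∃ V ∈ 𝓝 y, ∀ n : ℕ, 0 < n →
    ((traj f n '' U) ∩ V).Nonempty → traj f n '' U ⊆ O

/-- `(x, y)` is a syndetic equicontinuity pair for `(X, f_{1,∞})`. -/
def SynEqPair {X : Type*} [TopologicalSpace X] (f : ℕ → X → X) (x y : X) : Prop :=
  ∀ O ∈ 𝓝 y, ∃ U ∈ 𝓝 x, ∃ V ∈ 𝓝 y,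
    Syndetic {n : ℕ | ((traj f n '' U) ∩ V).Nonempty → traj f n '' U ⊆ O}

/-- `O` is a splitting neighborhood of `y` with respect to `x`. -/
def SplittingNbhd {X : Type*} [TopologicalSpace X] (f : ℕ → X → X) (x y : X) (O : Set X) :
    Prop :=
  O ∈ 𝓝 y ∧ ∀ U ∈ 𝓝 x, ∀ V ∈ 𝓝 y, ∃ n : ℕ, 0 < n ∧
    ((traj f n '' U) ∩ V).Nonempty ∧ ¬ traj f n '' U ⊆ O

/-- A finite open cover of `X`. -/
def IsFinOpenCover {X : Type*} [TopologicalSpace X] (𝒰 : Finset (Set X)) : Prop :=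
  (∀ U ∈ 𝒰, IsOpen U) ∧ ⋃₀ (↑𝒰 : Set (Set X)) = Set.univ

/-- `N(V, 𝒰)`: times at which `f_1^n(V)` is not contained in any single member of `𝒰`. -/
def HNSet {X : Type*} (f : ℕ → X → X) (V : Set X) (𝒰 : Finset (Set X)) : Set ℕ :=
  {n : ℕ | 0 < n ∧ ∀ U ∈ 𝒰, ¬ traj f n '' V ⊆ U}

/-- `N(V, 𝒰)` for the autonomous system. -/
def HNSetAut {X : Type*} (g : X → X) (V : Set X) (𝒰 : Finset (Set X)) : Set ℕ :=
  {n : ℕ | 0 < n ∧ ∀ U ∈ 𝒰, ¬ g^[n] '' V ⊆ U}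

/-- Hausdorff sensitivity of `(X, f_{1,∞})`. -/
def HSensitive {X : Type*} [TopologicalSpace X] (f : ℕ → X → X) : Prop :=
  ∃ 𝒰 : Finset (Set X), IsFinOpenCover 𝒰 ∧
    ∀ V : Set X, IsOpen V → V.Nonempty → (HNSet f V 𝒰).Nonempty

/-- Hausdorff sensitivity of the autonomous system `(X, g)`. -/
def HSensitiveAut {X : Type*} [TopologicalSpace X] (g : X → X) : Prop :=
  ∃ 𝒰 : Finset (Set X), IsFinOpenCover 𝒰 ∧
    ∀ V : Set X, IsOpen V → V.Nonempty → (HNSetAut g V 𝒰).Nonempty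

/-- Thick Hausdorff sensitivity of `(X, f_{1,∞})`. -/
def ThickHSensitive {X : Type*} [TopologicalSpace X] (f : ℕ → X → X) : Prop :=
  ∃ 𝒰 : Finset (Set X), IsFinOpenCover 𝒰 ∧
    ∀ V : Set X, IsOpen V → V.Nonempty → Thick (HNSet f V 𝒰)

/-- Thick Hausdorff sensitivity of the autonomous system `(X, g)`. -/
def ThickHSensitiveAut {X : Type*} [TopologicalSpace X] (g : X → X) : Prop :=
  ∃ 𝒰 : Finset (Set X), IsFinOpenCover 𝒰 ∧
    ∀ V : Set X, IsOpen V → V.Nonempty → Thick (HNSetAut g V 𝒰)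

/-- Multi-Hausdorff sensitivity of the autonomous system `(X, g)`. -/
def MultiHSensitiveAut {X : Type*} [TopologicalSpace X] (g : X → X) : Prop :=
  ∃ 𝒰 : Finset (Set X), IsFinOpenCover 𝒰 ∧
    ∀ (m : ℕ) (V : Fin (m + 1) → Set X),
      (∀ i, IsOpen (V i)) → (∀ i, (V i).Nonempty) → (⋂ i, HNSetAut g (V i) 𝒰).Nonempty

/-!
Call a point `E`-stable when some neighbourhood of it has pairwise `E`-close trajectories
forever; `E`-stable points form an open set, and a point is `E`-stable as soon as its image
at some time `m` is `E`-stable for the system restarted at `m`, because only the finitely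
many continuous maps before time `m` intervene. The orbit of a transitive point `x` splits
into `p` phase classes, one of which, say of phase `r`, is dense in a nonempty open set `O`.
The dense `g`-orbit of `x₀` passes through `O` at phase `r`, and later, since `X` has no
isolated points, through the open set of `E`-stable points around the equicontinuity point.
By periodicity all restarts at times `≡ r (mod p)` are the same system, so pulling back
shows that a point of `O`, hence a phase-`r` point of the orbit of `x`, hence `x` itself,
is `E`-stable.
-/

section

variable {X : Type*}

def shift (f : ℕ → X → X) (m : ℕ) : ℕ → X → X := fun n => f (m + n)

lemma shift_zero (f : ℕ → X → X) : shift f 0 = f :=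
  funext fun n => by rw [shift, zero_add]

lemma shift_shift (f : ℕ → X → X) (m n : ℕ) : shift (shift f m) n = shift f (m + n) :=
  funext fun k => by simp only [shift, add_assoc]

lemma traj_add (f : ℕ → X → X) (m : ℕ) : ∀ n, traj f (m + n) = traj (shift f m) n ∘ traj f m
  | 0 => rfl
  | n + 1 => by rw [← add_assoc, traj, traj, traj_add f m n]; rfl

lemma continuous_traj [TopologicalSpace X] {f : ℕ → X → X} (hf : ∀ n, Continuous (f n)) :
    ∀ n, Continuous (traj f n)
  | 0 => continuous_id
  | n + 1 => (hf (n + 1)).comp (continuous_traj hf n)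

namespace PeriodicFam

variable {f : ℕ → X → X} {p : ℕ}

lemma shift_mul (hper : PeriodicFam f p) (k : ℕ) : shift f (k * p) = f := by
  induction k with
  | zero => rw [zero_mul, shift_zero]
  | succ k ih =>
    funext n
    change f ((k + 1) * p + n) = f n
    rw [add_mul, one_mul, add_right_comm, hper]
    exact congrFun ih n

lemma shift_mul_add (hper : PeriodicFam f p) (k r : ℕ) : shift f (k * p + r) = shift f r := by
  rw [← shift_shift, hper.shift_mul]

lemma traj_mul (hper : PeriodicFam f p) (k : ℕ) : traj f (k * p) = (traj f p)^[k] := by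
  induction k with
  | zero => rw [zero_mul]; rfl
  | succ k ih => rw [add_mul, one_mul, traj_add, hper.shift_mul, ih, Function.iterate_succ']

lemma traj_mul_add (hper : PeriodicFam f p) (k r : ℕ) :
    traj f (k * p + r) = traj f r ∘ (traj f p)^[k] := by
  rw [traj_add, hper.shift_mul, hper.traj_mul]

end PeriodicFam

section Stable

variable [UniformSpace X] {f : ℕ → X → X} {E : Set (X × X)}

def IsStableSet (f : ℕ → X → X) (E : Set (X × X)) (U : Set X) : Prop :=
  ∀ y ∈ U, ∀ y' ∈ U, ∀ n, (traj f n y, traj f n y') ∈ E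

def stablePts (f : ℕ → X → X) (E : Set (X × X)) : Set X :=
  {x | ∃ U ∈ 𝓝 x, IsStableSet f E U}

lemma isOpen_stablePts : IsOpen (stablePts f E) := by
  refine isOpen_iff_mem_nhds.2 fun x ⟨U, hU, hs⟩ => ?_
  filter_upwards [eventually_mem_nhds_iff.2 hU] with y hy using ⟨U, hy, hs⟩

lemma eqPt_iff_forall_mem_stablePts {x : X} : EqPt f x ↔ ∀ E ∈ 𝓤 X, x ∈ stablePts f E := by
  constructor
  · intro hx E hE
    obtain ⟨ν, hν, hνsymm, hνE⟩ := comp_symm_mem_uniformity_sets hE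
    obtain ⟨D, hD, hxD⟩ := hx ν hν
    refine ⟨UniformSpace.ball x D, UniformSpace.ball_mem_nhds x hD, fun y hy y' hy' n => ?_⟩
    exact hνE (SetRel.prodMk_mem_comp (hνsymm.symm _ _ (hxD y hy n)) (hxD y' hy' n))
  · intro hx E hE
    obtain ⟨U, hU, hs⟩ := hx E hE
    obtain ⟨D, hD, hDU⟩ := UniformSpace.mem_nhds_iff.1 hU
    exact ⟨D, hD, fun y hy => hs x (mem_of_mem_nhds hU) y (hDU hy)⟩

lemma mem_stablePts_of_traj_mem (hf : ∀ n, Continuous (f n)) (hE : E ∈ 𝓤 X) {m : ℕ} {x : X}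
    (hx : traj f m x ∈ stablePts (shift f m) E) : x ∈ stablePts f E := by
  obtain ⟨V, hV, hs⟩ := hx
  obtain ⟨ν, hν, hνsymm, hνE⟩ := comp_symm_mem_uniformity_sets hE
  have hnear : ∀ᶠ y in 𝓝 x, ∀ j ∈ Finset.range m, (traj f j x, traj f j y) ∈ ν :=
    (Filter.eventually_all_finset _).2 fun j _ =>
      (continuous_traj hf j).continuousAt (UniformSpace.ball_mem_nhds _ hν)
  refine ⟨_, inter_mem ((continuous_traj hf m).continuousAt hV) hnear,
    fun y hy y' hy' n => ?_⟩
  rcases lt_or_ge n m with hnm | hmn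
  · have hy := hy.2 n (Finset.mem_range.2 hnm)
    have hy' := hy'.2 n (Finset.mem_range.2 hnm)
    exact hνE (SetRel.prodMk_mem_comp (hνsymm.symm _ _ hy) hy')
  · obtain ⟨k, rfl⟩ := Nat.exists_eq_add_of_le hmn
    rw [traj_add]
    exact hs _ hy.1 _ hy'.1 k

lemma traj_mem_stablePts_of_le (hf : ∀ n, Continuous (f n)) (hE : E ∈ 𝓤 X) {r m : ℕ} {x : X}
    (hrm : r ≤ m) (hx : traj f m x ∈ stablePts (shift f m) E) :
    traj f r x ∈ stablePts (shift f r) E := by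
  obtain ⟨d, rfl⟩ := Nat.exists_eq_add_of_le hrm
  refine mem_stablePts_of_traj_mem (f := shift f r) (fun n => hf (r + n)) hE (m := d) ?_
  rwa [shift_shift, ← Function.comp_apply (f := traj (shift f r) d), ← traj_add]

end Stable

lemma DenseRange.comp_add_right [TopologicalSpace X] [T1Space X] [∀ x : X, NeBot (𝓝[≠] x)]
    {u : ℕ → X} (hu : DenseRange u) (N : ℕ) : DenseRange fun n => u (n + N) := by
  refine (hu.sdiff_finite ((finite_lt_nat N).image u)).mono ?_
  rintro _ ⟨⟨n, rfl⟩, hn⟩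
  have hNn : N ≤ n := not_lt.1 fun h => hn ⟨n, h, rfl⟩
  exact ⟨n - N, congrArg u (Nat.sub_add_cancel hNn)⟩

lemma exists_nonempty_interior_closure_of_dense_biUnion [TopologicalSpace X] [Nonempty X]
    {ι : Type*} (t : Finset ι) {s : ι → Set X} (hd : Dense (⋃ i ∈ t, s i)) :
    ∃ i ∈ t, (interior (closure (s i))).Nonempty := by
  classical
  by_contra! hempty
  suffices interior (⋃ i ∈ t, closure (s i)) = ∅ by
    rw [← t.closure_biUnion, hd.closure_eq, interior_univ] at this
    exact univ_nonempty.ne_empty this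
  clear hd
  induction t using Finset.induction_on with
  | empty => simp
  | insert a t _ ih =>
    rw [Finset.set_biUnion_insert, interior_union_isClosed_of_interior_empty isClosed_closure
      (ih fun i hi => hempty i (Finset.mem_insert_of_mem hi))]
    exact hempty a (Finset.mem_insert_self a t)

lemma PeriodicFam.exists_nonempty_interior_closure_phase [TopologicalSpace X] {f : ℕ → X → X}
    {p : ℕ} (hper : PeriodicFam f p) (hp : 0 < p) {x : X} (hx : TransPt f x) :
    ∃ r < p, (interior (closure (range fun k => traj f r ((traj f p)^[k] x)))).Nonempty := by
  have : Nonempty X := ⟨x⟩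
  refine exists_nonempty_interior_closure_of_dense_biUnion (Finset.range p) (hx.mono ?_)
    |>.imp fun r ⟨hr, h⟩ => ⟨Finset.mem_range.1 hr, h⟩
  rintro _ ⟨n, rfl⟩
  refine mem_biUnion (Finset.mem_range.2 (Nat.mod_lt n hp)) ⟨n / p, ?_⟩
  change (traj f (n % p) ∘ (traj f p)^[n / p]) x = traj f n x
  rw [← hper.traj_mul_add, Nat.div_add_mod']

end

theorem transPt_mem_eqPts {X : Type*} [UniformSpace X] [T2Space X]
    (hiso : ∀ x : X, (𝓝[≠] x).NeBot)
    (f : ℕ → X → X) (hf : ∀ n, Continuous (f n))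
    (p : ℕ) (hp : 0 < p) (hper : PeriodicFam f p)
    (htrans : ∃ x, TransPtAut (traj f p) x)
    (heq : ∃ z, EqPt f z) :
    ∀ x : X, TransPt f x → EqPt f x := by
  intro x hx
  obtain ⟨x₀, hx₀ : DenseRange fun k => (traj f p)^[k] x₀⟩ := htrans
  obtain ⟨z, hz⟩ := heq
  have := hiso
  refine eqPt_iff_forall_mem_stablePts.2 fun E hE => ?_
  obtain ⟨r, hr, hO⟩ := hper.exists_nonempty_interior_closure_phase hp hx
  set O := interior (closure (range fun k => traj f r ((traj f p)^[k] x)))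
  obtain ⟨i, hi : traj f r ((traj f p)^[i] x₀) ∈ O⟩ : ∃ i, traj f r ((traj f p)^[i] x₀) ∈ O := by
    obtain ⟨_, hk, k, rfl⟩ :=
      mem_closure_iff.1 (interior_subset hO.some_mem) _ isOpen_interior hO.some_mem
    exact hx₀.exists_mem_open (isOpen_interior.preimage (continuous_traj hf r)) ⟨_, hk⟩
  obtain ⟨K, hK⟩ : ∃ K, (traj f p)^[K + (i + 1)] x₀ ∈ stablePts f E :=
    (hx₀.comp_add_right (i + 1)).exists_mem_open isOpen_stablePts
      ⟨z, eqPt_iff_forall_mem_stablePts.1 hz E hE⟩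
  have hi_stable : traj f r ((traj f p)^[i] x₀) ∈ stablePts (shift f r) E := by
    have := traj_mem_stablePts_of_le hf hE (r := i * p + r) (m := (K + (i + 1)) * p)
      (by nlinarith) (by rwa [hper.shift_mul, hper.traj_mul])
    rwa [hper.shift_mul_add, hper.traj_mul_add] at this
  obtain ⟨_, hj, j, rfl⟩ := mem_closure_iff.1 (interior_subset hi) _ isOpen_stablePts hi_stable
  refine mem_stablePts_of_traj_mem hf hE (m := j * p + r) ?_
  rwa [hper.shift_mul_add, hper.traj_mul_add]
end

section
/- Let (X, 𝒰) be a Hausdorff uniform space and (X, f_{1,∞}) a periodic non-autonomous system whose induced map g has a transitive point. If (X, f_{1,∞}) is not thickly sensitive, then every transitive point of (X, f_{1,∞}) is a syndetically equicontinuous point. Consequently, a minimal such system is either thickly sensitive or syndetically equicontinuous. -/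
open Topology Filter Set
open scoped Uniformity

section ThickAux

variable {X : Type*}

/-- The time-shifted family: `shiftF f s` is the family `n ↦ f (n + s)`. -/
private def shiftF (f : ℕ → X → X) (s : ℕ) : ℕ → X → X := fun n => f (n + s)

private lemma traj_add_s4 (F : ℕ → X → X) (s : ℕ) :
    ∀ (t : ℕ) (z : X), traj F (s + t) z = traj (shiftF F s) t (traj F s z)
  | 0, _ => rfl
  | (t+1), z => by
      have h1 : traj F (s + (t+1)) z = F (s + t + 1) (traj F (s + t) z) := rfl
      have h2 : traj (shiftF F s) (t + 1) (traj F s z)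
          = F (t + 1 + s) (traj (shiftF F s) t (traj F s z)) := rfl
      have h3 : s + t + 1 = t + 1 + s := by omega
      rw [h1, h2, ← traj_add_s4 F s t z, h3]

private lemma shiftF_shiftF (f : ℕ → X → X) (j s : ℕ) :
    shiftF (shiftF f j) s = shiftF f (s + j) := by
  funext n
  show f ((n + s) + j) = f (n + (s + j))
  rw [Nat.add_assoc]

private lemma per' {f : ℕ → X → X} {p : ℕ} (hper : PeriodicFam f p) :
    ∀ (k n : ℕ), f (n + p * k) = f n := by
  intro k
  induction k with
  | zero => intro n; simp
  | succ k ih =>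
      intro n
      rw [Nat.mul_succ, ← Nat.add_assoc, hper (n + p * k), ih n]

private lemma shiftF_p {f : ℕ → X → X} {p : ℕ} (hper : PeriodicFam f p) :
    shiftF f p = f :=
  funext fun n => hper n

private lemma traj_cont [TopologicalSpace X] (F : ℕ → X → X) (hF : ∀ n, Continuous (F n)) :
    ∀ n, Continuous (traj F n)
  | 0 => continuous_id
  | (n+1) => (hF (n+1)).comp (traj_cont F hF n)

private lemma synd_shift {S T : Set ℕ} (m : ℕ) (hS : Syndetic S)
    (h : ∀ s ∈ S, m + s ∈ T) : Syndetic T := by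
  obtain ⟨M, hM⟩ := hS
  refine ⟨M + m, fun n => ?_⟩
  obtain ⟨s, hsS, hs1, hs2⟩ := hM n
  exact ⟨m + s, h s hsS, by omega, by omega⟩

variable [UniformSpace X]

/-- The set of times at which all pairs from `W` remain `E`-close. -/
private def Jset (f : ℕ → X → X) (W : Set X) (E : Set (X × X)) : Set ℕ :=
  {n | ∀ x₁ ∈ W, ∀ x₂ ∈ W, (traj f n x₁, traj f n x₂) ∈ E}

/-- Points having an open neighborhood which is `E`-stable along a syndetic set of times. -/
private def EqS (f : ℕ → X → X) (E : Set (X × X)) : Set X :=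
  {z | ∃ W, IsOpen W ∧ z ∈ W ∧ Syndetic (Jset f W E)}

private lemma eqS_open (f : ℕ → X → X) (E : Set (X × X)) : IsOpen (EqS f E) := by
  rw [isOpen_iff_forall_mem_open]
  rintro z ⟨W, hWo, hzW, hWs⟩
  exact ⟨W, fun w hw => ⟨W, hWo, hw, hWs⟩, hWo, hzW⟩

private lemma pullback (F : ℕ → X → X) (hF : ∀ n, Continuous (F n)) (s : ℕ)
    (E : Set (X × X)) (z : X)
    (hz : traj F s z ∈ EqS (shiftF F s) E) : z ∈ EqS F E := by
  obtain ⟨W, hWo, hmem, hWs⟩ := hz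
  refine ⟨(traj F s) ⁻¹' W, hWo.preimage (traj_cont F hF s), hmem, ?_⟩
  refine synd_shift s hWs ?_
  intro t ht b hb c hc
  rw [traj_add_s4 F s t b, traj_add_s4 F s t c]
  exact ht _ hb _ hc

end ThickAux

/-- thick sensitivity vs syndetic equicontinuity. -/
theorem thickSensitive_or_synEq {X : Type*} [UniformSpace X] [T2Space X]
    (f : ℕ → X → X) (hf : ∀ n, Continuous (f n))
    (p : ℕ) (hp : 0 < p) (hper : PeriodicFam f p)
    (htrans : ∃ x, TransPtAut (traj f p) x) :
    (¬ ThickSensitive f → ∀ x : X, TransPt f x → SynEqPt f x) ∧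
    ((∀ x : X, TransPt f x) → ThickSensitive f ∨ ∀ x : X, SynEqPt f x) := by

  obtain ⟨x₀, hx₀⟩ := htrans
  have key : ¬ ThickSensitive f → ∀ x : X, TransPt f x → SynEqPt f x := by
    intro hNTS x hx
    intro Eent hEent
    by_cases hiso : ∃ v : X, IsOpen ({v} : Set X)
    · -- there is an isolated point: the dense orbit of `x` hits it and the
      -- trajectory collapses, giving syndetic equicontinuity trivially.
      obtain ⟨v, hv⟩ := hiso
      obtain ⟨w, hwmem, hwv⟩ := Dense.exists_mem_open hx hv ⟨v, rfl⟩
      obtain ⟨m, rfl⟩ := hwmem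
      refine ⟨(traj f m) ⁻¹' {v}, (hv.preimage (traj_cont f hf m)).mem_nhds hwv,
        m, fun n => ?_⟩
      refine ⟨m + n, fun b hb c hc => ?_, by omega, by omega⟩
      have hb' : traj f m b = v := hb
      have hc' : traj f m c = v := hc
      have hbc : traj f (m + n) b = traj f (m + n) c := by
        rw [traj_add_s4 f m n b, traj_add_s4 f m n c, hb', hc']
      rw [hbc]
      exact refl_mem_uniformity hEent
    · by_contra hgoal
      have hxE : x ∉ EqS f Eent := by
        rintro ⟨W, hWo, hxW, hWs⟩
        exact hgoal ⟨W, hWo.mem_nhds hxW, hWs⟩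
      -- a set with syndetically stable phase-0 evolution, from non-thick-sensitivity
      obtain ⟨U, hUo, hUne, hUsyn⟩ :
          ∃ U : Set X, IsOpen U ∧ U.Nonempty ∧ Syndetic (Jset f U Eent) := by
        have h1 : ¬ (∀ U : Set X, IsOpen U → U.Nonempty → Thick (NSet f U Eent)) :=
          fun hall => hNTS ⟨Eent, hEent, hall⟩
        push_neg at h1
        obtain ⟨U, hUo, hUne, hUth⟩ := h1
        unfold Thick at hUth
        push_neg at hUth
        obtain ⟨k₀, hk₀⟩ := hUth
        refine ⟨U, hUo, hUne, k₀ + 1, fun n => ?_⟩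
        obtain ⟨i, hik, hni⟩ := hk₀ (n + 1)
        refine ⟨n + 1 + i, fun b hb c hc => ?_, by omega, by omega⟩
        by_contra hnot
        exact hni ⟨by omega, b, hb, c, hc, hnot⟩
      -- the whole g-orbit of x₀ consists of phase-0 syndetic equicontinuity points
      have dstep : ∀ z : X, traj f p z ∈ EqS f Eent → z ∈ EqS f Eent := by
        intro z hz
        refine pullback f hf p Eent z ?_
        rwa [shiftF_p hper]
      have dchain : ∀ k t : ℕ, (traj f p)^[k + t] x₀ ∈ EqS f Eent →
          (traj f p)^[k] x₀ ∈ EqS f Eent := by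
        intro k t
        induction t with
        | zero => exact id
        | succ t ih =>
            intro h
            rw [← Nat.add_assoc] at h
            rw [Function.iterate_succ_apply'] at h
            exact ih (dstep _ h)
      have orbitEq : ∀ k, (traj f p)^[k] x₀ ∈ EqS f Eent := by
        by_contra hcon
        push_neg at hcon
        obtain ⟨κ, hκ⟩ := hcon
        have htail : ∀ k, κ ≤ k → (traj f p)^[k] x₀ ∉ EqS f Eent := by
          intro k hk hmem
          exact hκ (dchain κ (k - κ) (by rwa [Nat.add_sub_cancel' hk]))
        obtain ⟨u0, hu0⟩ := hUne
        have hu0Eq : u0 ∈ EqS f Eent := ⟨U, hUo, hu0, hUsyn⟩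
        have hFfin : ((fun k => (traj f p)^[k] x₀) '' (Set.Iio κ)).Finite :=
          (Set.finite_Iio κ).image _
        have hsub : EqS f Eent ⊆ (fun k => (traj f p)^[k] x₀) '' (Set.Iio κ) := by
          intro z hz
          by_contra hzF
          obtain ⟨w, hw⟩ := Dense.inter_open_nonempty hx₀ _
            ((eqS_open f Eent).sdiff hFfin.isClosed) ⟨z, hz, hzF⟩
          obtain ⟨k, hk⟩ := hw.2
          rcases lt_or_ge k κ with h | h
          · exact hw.1.2 ⟨k, h, hk⟩
          · have hk' : (traj f p)^[k] x₀ = w := hk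
            exact htail k h (by rw [hk']; exact hw.1.1)
        have hfin2 : (EqS f Eent \ {u0}).Finite :=
          hFfin.subset (fun z hz => hsub hz.1)
        have hsingleton : ({u0} : Set X) = EqS f Eent \ (EqS f Eent \ {u0}) := by
          ext z
          constructor
          · intro hz
            have hz' : z = u0 := hz
            subst hz'
            exact ⟨hu0Eq, fun h => h.2 rfl⟩
          · rintro ⟨hz1, hz2⟩
            by_contra hne
            exact hz2 ⟨hz1, hne⟩
        exact hiso ⟨u0, by
          rw [hsingleton]
          exact (eqS_open f Eent).sdiff hfin2.isClosed⟩
      -- the basic periodicity identity: traj f (n + p·k) = traj f n ∘ g^[k]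
      have I3 : ∀ (k n : ℕ) (z : X),
          traj f (n + p * k) z = traj f n ((traj f p)^[k] z) := by
        intro k
        induction k with
        | zero => intro n z; simp
        | succ k ih =>
            intro n z
            have h1 : n + p * (k + 1) = p + (n + p * k) := by ring
            rw [h1, traj_add_s4 f p (n + p * k) z, shiftF_p hper, ih n (traj f p z),
              ← Function.iterate_succ_apply]
      -- X is covered by the closures of the phase images of the g-orbit of x
      have hcoversub :
          (Set.range fun n => traj f n x) ⊆
            ⋃ j < p, traj f j '' (Set.range fun k => (traj f p)^[k] x) := by
        rintro _ ⟨m, rfl⟩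
        refine Set.mem_iUnion₂.2 ⟨m % p, Nat.mod_lt _ hp,
          ⟨(traj f p)^[m / p] x, ⟨m / p, rfl⟩, ?_⟩⟩
        rw [← I3 (m / p) (m % p) x, Nat.mod_add_div m p]
      have hunion :
          (⋃ j < p,
            closure (traj f j '' (Set.range fun k => (traj f p)^[k] x))) = Set.univ := by
        apply Set.eq_univ_of_univ_subset
        have hden : Dense (⋃ j < p,
            traj f j '' (Set.range fun k => (traj f p)^[k] x)) :=
          Dense.mono hcoversub hx
        rw [← hden.closure_eq]
        refine closure_minimal ?_ ?_
        · exact Set.iUnion₂_mono fun j _ => subset_closure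
        · exact Set.Finite.isClosed_biUnion (Set.finite_Iio p)
            (fun j _ => isClosed_closure)
      -- one of the phases has nonempty interior
      have int_union_pair : ∀ (C S : Set X), IsClosed C → interior C = ∅ →
          interior S = ∅ → interior (C ∪ S) = ∅ := by
        intro C S hC hCi hSi
        have h1 : interior (C ∪ S) \ C ⊆ interior S := by
          refine interior_maximal ?_ (isOpen_interior.sdiff hC)
          intro z hz
          rcases interior_subset hz.1 with h | h
          · exact absurd h hz.2
          · exact h
        have h2 : interior (C ∪ S) ⊆ C := by
          intro z hz
          by_contra hzC
          have := h1 ⟨hz, hzC⟩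
          rw [hSi] at this
          exact this
        have h3 : interior (C ∪ S) ⊆ interior C :=
          interior_maximal h2 isOpen_interior
        rw [hCi] at h3
        exact Set.eq_empty_of_subset_empty h3
      have int_union : ∀ (n : ℕ) (C : ℕ → Set X), (∀ j, IsClosed (C j)) →
          (∀ j < n, interior (C j) = ∅) →
          interior (⋃ j < n, C j) = ∅ := by
        intro n C hCc
        induction n with
        | zero => intro _; simp
        | succ n ih =>
            intro hn
            rw [Set.biUnion_lt_succ, Set.union_comm]
            exact int_union_pair _ _ (hCc n) (hn n (by omega))
              (ih fun j hj => hn j (by omega))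
      obtain ⟨j, hjp, hGne⟩ : ∃ j, j < p ∧
          (interior (closure
            (traj f j '' (Set.range fun k => (traj f p)^[k] x)))).Nonempty := by
        by_contra hcon
        push_neg at hcon
        have h0 := int_union p
          (fun j => closure (traj f j '' (Set.range fun k => (traj f p)^[k] x)))
          (fun j => isClosed_closure)
          (fun j hj => hcon j hj)
        rw [hunion, interior_univ] at h0
        exact (Set.eq_empty_iff_forall_notMem.1 h0) x₀ (Set.mem_univ x₀)
      by_cases hcap :
          ((interior (closure (traj f j '' (Set.range fun k => (traj f p)^[k] x))))
            ∩ EqS (shiftF f j) Eent).Nonempty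
      · -- horn 1: a phase-j orbit point of x is a phase-j Eq point, so x ∈ EqS f Eent
        obtain ⟨z, hzG, hzE⟩ := hcap
        obtain ⟨W, hWo, hzW, hWs⟩ := hzE
        have hz2 : z ∈ closure (traj f j '' (Set.range fun k => (traj f p)^[k] x)) :=
          interior_subset hzG
        obtain ⟨w, hwW, hwim⟩ := mem_closure_iff.1 hz2 W hWo hzW
        obtain ⟨a, ⟨k, hk⟩, rfl⟩ := hwim
        apply hxE
        refine pullback f hf (j + p * k) Eent x ?_
        have hshift : shiftF f (j + p * k) = shiftF f j := by
          funext n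
          show f (n + (j + p * k)) = f (n + j)
          rw [← Nat.add_assoc]
          exact per' hper k (n + j)
        have hk' : (traj f p)^[k] x = a := hk
        rw [I3 k j x, hshift, hk']
        exact ⟨W, hWo, hwW, hWs⟩
      · -- horn 2: phase-j completion of points in the interior avoids EqS f Eent,
        -- so no point there is in the range of traj f j — contradicting that the
        -- interior sits inside the closure of a phase-j image.
        have hpsi : ∀ z ∈ interior (closure
            (traj f j '' (Set.range fun k => (traj f p)^[k] x))),
            traj (shiftF f j) (p - j) z ∉ EqS f Eent := by
          intro z hzG hz
          refine hcap ⟨z, hzG, ?_⟩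
          refine pullback (shiftF f j) (fun n => hf (n + j)) (p - j) Eent z ?_
          rw [shiftF_shiftF, Nat.sub_add_cancel hjp.le, shiftF_p hper]
          exact hz
        have hgu : ∀ u : X, traj f j u ∈ interior (closure
            (traj f j '' (Set.range fun k => (traj f p)^[k] x))) →
            traj f p u ∉ EqS f Eent := by
          intro u hu hcon2
          apply hpsi _ hu
          rw [← traj_add_s4 f j (p - j) u, Nat.add_sub_cancel' hjp.le]
          exact hcon2
        have hdense : Dense {u : X | traj f p u ∈ EqS f Eent} := by
          refine Dense.mono ?_ hx₀
          rintro _ ⟨k, rfl⟩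
          show traj f p ((traj f p)^[k] x₀) ∈ EqS f Eent
          exact (Function.iterate_succ_apply' (traj f p) k x₀) ▸ orbitEq (k + 1)
        have hpre : (traj f j ⁻¹' interior (closure
            (traj f j '' (Set.range fun k => (traj f p)^[k] x)))) = ∅ := by
          rw [Set.eq_empty_iff_forall_notMem]
          intro u hu
          obtain ⟨u', hu'⟩ := Dense.inter_open_nonempty hdense _
            (isOpen_interior.preimage (traj_cont f hf j)) ⟨u, hu⟩
          exact hgu u' hu'.1 hu'.2
        obtain ⟨z0, hz0⟩ := hGne
        have hz0c : z0 ∈ closure (Set.range (traj f j)) := by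
          refine closure_mono ?_ (interior_subset hz0)
          rintro _ ⟨u, _, rfl⟩
          exact ⟨u, rfl⟩
        obtain ⟨w, hwG, u, rfl⟩ := mem_closure_iff.1 hz0c _ isOpen_interior hz0
        have hu : u ∈ traj f j ⁻¹' interior (closure
            (traj f j '' (Set.range fun k => (traj f p)^[k] x))) := hwG
        rw [hpre] at hu
        exact hu
  refine ⟨key, fun hall => ?_⟩
  by_cases hts : ThickSensitive f
  · exact Or.inl hts
  · exact Or.inr fun x => key hts x (hall x)
end

section
/- Let (X, f_{1,∞}) be a periodic non-autonomous system on a compact uniform space (X, 𝒰) with period p and induced map g. Then (X, f_{1,∞}) is thickly sensitive if and only if (X, g) is thickly sensitive. -/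
open Topology Filter Set
open scoped Uniformity

/-- `seg f r j = f (r+j) ∘ ⋯ ∘ f (r+1)`. -/
def seg {X : Type*} (f : ℕ → X → X) (r : ℕ) : ℕ → X → X
  | 0 => id
  | j + 1 => f (r + j + 1) ∘ seg f r j

lemma traj_add_s6 {X : Type*} (f : ℕ → X → X) (r j : ℕ) :
    traj f (r + j) = seg f r j ∘ traj f r := by
  induction j with
  | zero => rfl
  | succ j ih =>
    show traj f ((r + j) + 1) = _
    rw [show traj f ((r+j)+1) = f (r + j + 1) ∘ traj f (r + j) from rfl, ih]
    rfl

lemma f_add_mul {X : Type*} {f : ℕ → X → X} {p : ℕ} (hper : PeriodicFam f p)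
    (n q : ℕ) : f (n + q * p) = f n := by
  induction q with
  | zero => simp
  | succ q ih => rw [show n + (q+1)*p = (n + q*p) + p by ring, hper, ih]

lemma seg_shift {X : Type*} {f : ℕ → X → X} {p : ℕ} (hper : PeriodicFam f p)
    (s q j : ℕ) : seg f (s + q * p) j = seg f s j := by
  induction j with
  | zero => rfl
  | succ j ih =>
    show f (s + q * p + j + 1) ∘ _ = f (s + j + 1) ∘ _
    rw [ih, show s + q * p + j + 1 = (s + j + 1) + q * p by ring, f_add_mul hper]

lemma seg_zero {X : Type*} (f : ℕ → X → X) (j : ℕ) : seg f 0 j = traj f j := by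
  induction j with
  | zero => rfl
  | succ j ih =>
    show f (0 + j + 1) ∘ _ = _
    rw [ih, Nat.zero_add]
    rfl

lemma iterate_traj {X : Type*} {f : ℕ → X → X} {p : ℕ} (hper : PeriodicFam f p)
    (q : ℕ) : (traj f p)^[q] = traj f (q * p) := by
  induction q with
  | zero => simp [traj]
  | succ q ih =>
    rw [Function.iterate_succ', ih, show (q+1)*p = q*p + p by ring, traj_add_s6,
      show q * p = 0 + q * p by ring, seg_shift hper, seg_zero]

lemma continuous_seg {X : Type*} [TopologicalSpace X] {f : ℕ → X → X}
    (hf : ∀ n, Continuous (f n)) (r j : ℕ) : Continuous (seg f r j) := by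
  induction j with
  | zero => exact continuous_id
  | succ j ih => exact (hf _).comp ih

theorem thickSensitive_iff_thickSensitive_induced {X : Type*} [UniformSpace X]
    [CompactSpace X]
    (f : ℕ → X → X) (hf : ∀ n, Continuous (f n))
    (p : ℕ) (hp : 0 < p) (hper : PeriodicFam f p) :
    ThickSensitive f ↔ ThickSensitiveAut (traj f p) := by
  constructor
  · rintro ⟨D, hD, hT⟩
    refine ⟨D, hD, fun U hUo hUne => ?_⟩
    intro k
    obtain ⟨n, hn⟩ := hT U hUo hUne ((k + 1) * p)
    refine ⟨n / p + 1, fun j hj => ?_⟩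
    have hmod := Nat.div_add_mod n p
    have hlt : n % p < p := Nat.mod_lt _ hp
    have hjk : j * p ≤ k * p := Nat.mul_le_mul_right _ hj
    have heq : (n / p + 1 + j) * p = n + (p - n % p + j * p) := by
      have : (n / p + 1 + j) * p = (n / p) * p + p + j * p := by ring
      have h2 : (n / p) * p = p * (n / p) := Nat.mul_comm _ _
      omega
    have hle : p - n % p + j * p ≤ (k + 1) * p := by
      have : (k + 1) * p = k * p + p := by ring
      omega
    obtain ⟨-, x, hx, y, hy, hxy⟩ := hn _ hle
    refine ⟨by positivity, x, hx, y, hy, ?_⟩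
    rw [iterate_traj hper]
    rwa [heq]
  · rintro ⟨D, hD, hT⟩
    have huc : ∀ r : ℕ, UniformContinuous (seg f r (p - r)) := fun r =>
      CompactSpace.uniformContinuous_of_continuous (continuous_seg hf r (p - r))
    set D' : Set (X × X) :=
      ⋂ r ∈ Finset.range p, {ab : X × X | (seg f r (p - r) ab.1, seg f r (p - r) ab.2) ∈ D}
      with hD'def
    have hD' : D' ∈ 𝓤 X := by
      refine (Filter.biInter_finset_mem _).mpr fun r _ => ?_
      exact huc r hD
    refine ⟨D', hD', fun U hUo hUne => ?_⟩
    intro k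
    obtain ⟨q, hq⟩ := hT U hUo hUne (k / p + 1)
    have hq1 : 0 < q := (hq 0 (Nat.zero_le _)).1
    refine ⟨q * p, fun i hik => ?_⟩
    set r := i % p with hr
    set q' := q + i / p with hq'
    have hrp : r < p := Nat.mod_lt _ hp
    have hsplit : q * p + i = q' * p + r := by
      have h1 := Nat.div_add_mod i p
      have : q' * p = q * p + (i / p) * p := by ring
      have h2 : (i / p) * p = p * (i / p) := Nat.mul_comm _ _
      omega
    have hjle : i / p + 1 ≤ k / p + 1 := by
      have := Nat.div_le_div_right (c := p) hik
      omega
    obtain ⟨-, x, hx, y, hy, hxy⟩ := hq _ hjle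
    have hiter : ∀ z : X, seg f r (p - r) (traj f (q' * p + r) z) = (traj f p)^[q' + 1] z := by
      intro z
      have h1 : traj f ((q' * p + r) + (p - r)) = seg f (q' * p + r) (p - r) ∘ traj f (q' * p + r) :=
        traj_add_s6 f _ _
      have h2 : seg f (q' * p + r) (p - r) = seg f r (p - r) := by
        rw [show q' * p + r = r + q' * p by ring, seg_shift hper]
      have h3 : (q' * p + r) + (p - r) = (q' + 1) * p := by
        have : (q' + 1) * p = q' * p + p := by ring
        omega
      rw [iterate_traj hper, ← h2, show (q' + 1) * p = (q' + 1) * p from rfl, ← h3, h1]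
      rfl
    refine ⟨by positivity, x, hx, y, hy, fun hmem => ?_⟩
    have : (traj f (q * p + i) x, traj f (q * p + i) y) ∈
        {ab : X × X | (seg f r (p - r) ab.1, seg f r (p - r) ab.2) ∈ D} := by
      have := Set.mem_iInter₂.mp (hD'def ▸ hmem) r (Finset.mem_range.mpr hrp)
      exact this
    rw [hsplit] at this
    simp only [Set.mem_setOf_eq, hiter] at this
    have heq2 : q' + 1 = q + (i / p + 1) := by omega
    rw [← heq2] at hxy
    exact hxy this
end

section
/- If (X, g) is an autonomous system on a compact Hausdorff uniform space that is eventually sensitive with entourage D₀, and (f_{1,∞}) is a periodic family of period p with g = f_p ∘ ⋯ ∘ f_1, then (X, f_{1,∞}) is eventually sensitive with the same entourage D₀. -/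
open Topology Filter Set
open scoped Uniformity

lemma traj_add_s10 {X : Type*} (f : ℕ → X → X) (a b : ℕ) (x : X) :
    traj f (a + b) x = traj (fun j => f (a + j)) b (traj f a x) := by
  induction b with
  | zero => rfl
  | succ b ih =>
    show f (a + b + 1) (traj f (a + b) x) = f (a + (b + 1)) _
    rw [ih, Nat.add_assoc]

lemma periodic_shift {X : Type*} {f : ℕ → X → X} {p : ℕ} (hper : PeriodicFam f p)
    (q : ℕ) : (fun j => f (p * q + j)) = f := by
  induction q with
  | zero => simp
  | succ q ih =>
    funext j
    have h1 : p * (q + 1) + j = (p * q + j) + p := by ring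
    rw [h1, hper]
    exact congrFun ih j

lemma traj_mul {X : Type*} {f : ℕ → X → X} {p : ℕ} (hper : PeriodicFam f p)
    (q : ℕ) (x : X) : traj f (p * q) x = (traj f p)^[q] x := by
  induction q with
  | zero => simp [traj]
  | succ q ih =>
    rw [Nat.mul_succ, traj_add_s10, periodic_shift hper, Function.iterate_succ_apply', ih]

theorem evSensitive_of_induced_evSensitive {X : Type*} [UniformSpace X] [CompactSpace X]
    [T2Space X]
    (f : ℕ → X → X) (hf : ∀ n, Continuous (f n))
    (p : ℕ) (hp : 0 < p) (hper : PeriodicFam f p)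
    (D₀ : Set (X × X)) (hD₀ : D₀ ∈ 𝓤 X)
    (hev : EvSensitiveAutWith (traj f p) D₀) :
    EvSensitiveWith f D₀ := by
  intro x E hE
  obtain ⟨q, k, hq, hk, y, hy1, hy2⟩ := hev x E hE
  refine ⟨p * q, p * k, Nat.mul_pos hp hq, Nat.mul_pos hp hk, y, ?_, ?_⟩
  · rwa [traj_mul hper]
  · rw [show p * q + p * k = p * (q + k) by ring, traj_mul hper, traj_mul hper]
    exact hy2
end
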